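/- arXiv:1705.01223 — 2 statements merged into one kernel-verified Lean document; each statement's English description precedes it below -/
import Mathlib

section
/- For every n ≥ 1 and D > 0 there is a constant C₂ > 0 such that for every δ > 0, all nonempty compact sets A, B ⊂ ℝⁿ of diameter at most D, and every δ-isometry f : A → B, there exists a surjective isometry g of ℝⁿ with ‖g(x) − f(x)‖ ≤ C₂·√δ for all x ∈ A. -/
/-!
Translate a point of `A` and its image to the origin. Distances are at most `D` and distorted by
less than `δ`, so squared distances are distorted by at most `2Dδ` and, by polarization, inner
products by at most `ε = 3Dδ`. It remains to show `GramStable m C_m`: whenever a bounded family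
`x` and a family `y` in `m`-dimensional spaces have `ε`-close Gram matrices, some linear isometry
`U` satisfies `‖U (x i) - y i‖ ≤ C_m √ε`. This goes by induction on `m`. If every `x i` has norm
`O(√ε)`, any `U` will do. Otherwise let `R = sup ‖x i‖` and pick `k` with `‖x k‖ > R / 2`. The
coordinates of `x i` along `u = x k / ‖x k‖` and of `y i` along `v = y k / ‖y k‖` differ by
`O(ε / R) ≤ √ε`, so the projections of the two families onto `uᗮ` and `vᗮ` still have
`O(ε)`-close Gram matrices; the isometry `uᗮ ≃ vᗮ` given by induction, extended by `u ↦ v`, works.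
-/

open Metric Set Module Bornology Submodule
open scoped RealInnerProductSpace

universe u v

lemma le_add_sqrt_of_sq_le {a b ε : ℝ} (hb : 0 ≤ b) (hε : 0 ≤ ε) (h : a ^ 2 ≤ b ^ 2 + ε) :
    a ≤ b + √ε := by
  nlinarith [Real.sq_sqrt hε, Real.sqrt_nonneg ε]

lemma abs_mul_sub_mul_le {s s' t t' R d : ℝ} (hs : |s| ≤ R) (hs' : |s'| ≤ R)
    (ht : |t - s| ≤ d) (ht' : |t' - s'| ≤ d) (hd : d ≤ R) :
    |t * t' - s * s'| ≤ 3 * R * d := by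
  have ht'R : |t'| ≤ 2 * R := by
    calc |t'| = |(t' - s') + s'| := by rw [sub_add_cancel]
      _ ≤ |t' - s'| + |s'| := abs_add_le _ _
      _ ≤ 2 * R := by linarith
  calc |t * t' - s * s'| = |(t - s) * t' + s * (t' - s')| := by ring_nf
    _ ≤ |t - s| * |t'| + |s| * |t' - s'| := by
        rw [← abs_mul, ← abs_mul]; exact abs_add_le _ _
    _ ≤ d * (2 * R) + R * d := by
        have hd0 : 0 ≤ d := (abs_nonneg _).trans ht
        gcongr; linarith
    _ = 3 * R * d := by ring

lemma abs_sq_sub_sq_le {a b D δ : ℝ} (ha : 0 ≤ a) (hb : 0 ≤ b) (haD : a ≤ D) (hbD : b ≤ D)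
    (h : |a - b| ≤ δ) : |a ^ 2 - b ^ 2| ≤ 2 * D * δ := by
  rw [sq_sub_sq, abs_mul, abs_of_nonneg (add_nonneg ha hb)]
  exact mul_le_mul (by linarith) h (abs_nonneg _) (by linarith)

lemma abs_div_sub_div_le {p q A B R ε : ℝ} (hR : 0 < R) (hRε : 9 * ε ≤ R ^ 2)
    (hp : R < 2 * p) (hq : 0 ≤ q) (hA : |A| ≤ p * R) (hAB : |B - A| ≤ ε)
    (hpq : |q ^ 2 - p ^ 2| ≤ ε) :
    |B / q - A / p| ≤ 9 * ε / R := by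
  have hp0 : 0 < p := by linarith
  rw [abs_le] at hpq
  have hq3 : R < 3 * q := by nlinarith
  have hq0 : 0 < q := by linarith
  have hqp : |p - q| * R ≤ 2 * ε := by
    have : |p - q| * (p + q) ≤ ε := by
      rw [← abs_of_pos (by positivity : 0 < p + q), ← abs_mul, abs_le]
      constructor <;> nlinarith
    nlinarith [abs_nonneg (p - q)]
  have hsplit : B / q - A / p = (B - A) / q + A * (p - q) / (p * q) := by
    field_simp; ring
  have h1 : |(B - A) / q| ≤ 3 * ε / R := by
    rw [abs_div, abs_of_pos hq0, div_le_div_iff₀ hq0 hR]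
    nlinarith [abs_nonneg (B - A)]
  have h2 : |A * (p - q) / (p * q)| ≤ 6 * ε / R := by
    rw [abs_div, abs_mul, abs_of_pos (by positivity : 0 < p * q),
      div_le_div_iff₀ (by positivity) hR]
    calc |A| * |p - q| * R ≤ (p * R) * (2 * ε) := by
          rw [mul_assoc]; gcongr
      _ ≤ 6 * ε * (p * q) := by
          have hεp : 0 ≤ ε * p := mul_nonneg ((abs_nonneg _).trans hAB) hp0.le
          nlinarith [mul_le_mul_of_nonneg_left hq3.le hεp]
  calc |B / q - A / p| ≤ |(B - A) / q| + |A * (p - q) / (p * q)| := by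
        rw [hsplit]; exact abs_add_le _ _
    _ ≤ 3 * ε / R + 6 * ε / R := add_le_add h1 h2
    _ = 9 * ε / R := by ring

section

variable {E F : Type*} [NormedAddCommGroup E] [InnerProductSpace ℝ E]
  [NormedAddCommGroup F] [InnerProductSpace ℝ F]

lemma exists_linearIsometryEquiv_norm_sub_le [FiniteDimensional ℝ E] [FiniteDimensional ℝ F]
    (h : finrank ℝ E = finrank ℝ F) {ι : Type*} (x : ι → E) (y : ι → F) {r ε : ℝ}
    (hε : 0 ≤ ε) (hx : ∀ i, ‖x i‖ ≤ r) (hy : ∀ i, ‖y i‖ ^ 2 ≤ ‖x i‖ ^ 2 + ε) :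
    ∃ U : E ≃ₗᵢ[ℝ] F, ∀ i, ‖U (x i) - y i‖ ≤ 2 * r + √ε := by
  let U := (stdOrthonormalBasis ℝ E).equiv (stdOrthonormalBasis ℝ F) (finCongr h)
  refine ⟨U, fun i => ?_⟩
  calc ‖U (x i) - y i‖ ≤ ‖U (x i)‖ + ‖y i‖ := norm_sub_le _ _
    _ ≤ ‖x i‖ + (‖x i‖ + √ε) := by
        rw [U.norm_map]; gcongr; exact le_add_sqrt_of_sq_le (norm_nonneg _) hε (hy i)
    _ ≤ 2 * r + √ε := by linarith [hx i]

lemma starProjection_orthogonal_unit_singleton {u : E} (hu : ‖u‖ = 1) (x : E) :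
    (ℝ ∙ u)ᗮ.starProjection x = x - ⟪u, x⟫ • u := by
  rw [starProjection_orthogonal_val, starProjection_unit_singleton ℝ hu]

lemma inner_starProjection_orthogonal_unit_singleton {u : E} (hu : ‖u‖ = 1) (x y : E) :
    ⟪(ℝ ∙ u)ᗮ.starProjection x, (ℝ ∙ u)ᗮ.starProjection y⟫ = ⟪x, y⟫ - ⟪u, x⟫ * ⟪u, y⟫ := by
  simp only [starProjection_orthogonal_unit_singleton hu, inner_sub_left, inner_sub_right,
    real_inner_smul_left, real_inner_smul_right, real_inner_self_eq_norm_sq, hu,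
    real_inner_comm u]
  ring

lemma abs_inner_orthogonalProjectionOnto_sub_le {u : E} {v : F} (hu : ‖u‖ = 1) (hv : ‖v‖ = 1)
    {x x' : E} {y y' : F} {R d ε : ℝ} (hxy : |⟪y, y'⟫ - ⟪x, x'⟫| ≤ ε) (hx : |⟪u, x⟫| ≤ R)
    (hx' : |⟪u, x'⟫| ≤ R) (hy : |⟪v, y⟫ - ⟪u, x⟫| ≤ d) (hy' : |⟪v, y'⟫ - ⟪u, x'⟫| ≤ d)
    (hd : d ≤ R) :
    |⟪(ℝ ∙ v)ᗮ.orthogonalProjectionOnto y, (ℝ ∙ v)ᗮ.orthogonalProjectionOnto y'⟫ -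
      ⟪(ℝ ∙ u)ᗮ.orthogonalProjectionOnto x, (ℝ ∙ u)ᗮ.orthogonalProjectionOnto x'⟫| ≤
      ε + 3 * R * d := by
  rw [coe_inner, coe_inner, ← starProjection_apply, ← starProjection_apply,
    ← starProjection_apply, ← starProjection_apply,
    inner_starProjection_orthogonal_unit_singleton hu,
    inner_starProjection_orthogonal_unit_singleton hv]
  calc _ = |(⟪y, y'⟫ - ⟪x, x'⟫) - (⟪v, y⟫ * ⟪v, y'⟫ - ⟪u, x⟫ * ⟪u, x'⟫)| := by ring_nf
    _ ≤ ε + 3 * R * d :=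
      (abs_sub _ _).trans (add_le_add hxy (abs_mul_sub_mul_le hx hx' hy hy' hd))

lemma exists_linearIsometryEquiv_eq_inner_smul_add [FiniteDimensional ℝ E] [FiniteDimensional ℝ F]
    (h : finrank ℝ E = finrank ℝ F) {u : E} {v : F} (hu : ‖u‖ = 1) (hv : ‖v‖ = 1)
    (U : (ℝ ∙ u)ᗮ ≃ₗᵢ[ℝ] (ℝ ∙ v)ᗮ) :
    ∃ T : E ≃ₗᵢ[ℝ] F, ∀ x, T x = ⟪u, x⟫ • v + U ((ℝ ∙ u)ᗮ.orthogonalProjectionOnto x) := by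
  let L : E →L[ℝ] F := (innerSL ℝ u).smulRight v +
    (ℝ ∙ v)ᗮ.subtypeL ∘L U.toContinuousLinearEquiv.toContinuousLinearMap ∘L
      (ℝ ∙ u)ᗮ.orthogonalProjectionOnto
  have hL : ∀ x, ‖L x‖ = ‖x‖ := by
    intro x
    have horth : ⟪⟪u, x⟫ • v, (U ((ℝ ∙ u)ᗮ.orthogonalProjectionOnto x) : F)⟫ = 0 := by
      rw [real_inner_smul_left,
        mem_orthogonal_singleton_iff_inner_right.mp (U _).2, mul_zero]
    have hx := norm_sq_eq_add_norm_sq_starProjection x (ℝ ∙ u)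
    rw [starProjection_unit_singleton ℝ hu, starProjection_apply, norm_coe, norm_smul, hu,
      mul_one] at hx
    have hLx : L x = ⟪u, x⟫ • v + U ((ℝ ∙ u)ᗮ.orthogonalProjectionOnto x) := rfl
    rw [← sq_eq_sq₀ (norm_nonneg _) (norm_nonneg _), hx, sq, sq, sq, hLx,
      norm_add_sq_eq_norm_sq_add_norm_sq_real horth, norm_smul, hv, mul_one, norm_coe,
      LinearIsometryEquiv.norm_map]
  exact ⟨LinearIsometry.toLinearIsometryEquiv ⟨L.toLinearMap, hL⟩ h, fun x => rfl⟩

lemma exists_linearIsometryEquiv_norm_sub_le_add [FiniteDimensional ℝ E] [FiniteDimensional ℝ F]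
    (h : finrank ℝ E = finrank ℝ F) {u : E} {v : F} (hu : ‖u‖ = 1) (hv : ‖v‖ = 1)
    (U : (ℝ ∙ u)ᗮ ≃ₗᵢ[ℝ] (ℝ ∙ v)ᗮ) :
    ∃ T : E ≃ₗᵢ[ℝ] F, ∀ x y, ‖T x - y‖ ≤ |⟪v, y⟫ - ⟪u, x⟫| +
      ‖U ((ℝ ∙ u)ᗮ.orthogonalProjectionOnto x) - (ℝ ∙ v)ᗮ.orthogonalProjectionOnto y‖ := by
  obtain ⟨T, hT⟩ := exists_linearIsometryEquiv_eq_inner_smul_add h hu hv U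
  refine ⟨T, fun x y => ?_⟩
  have hy : y = ⟪v, y⟫ • v + (ℝ ∙ v)ᗮ.orthogonalProjectionOnto y := by
    rw [← starProjection_apply, starProjection_orthogonal_unit_singleton hv, add_sub_cancel]
  calc ‖T x - y‖ = ‖(⟪u, x⟫ - ⟪v, y⟫) • v + ((U ((ℝ ∙ u)ᗮ.orthogonalProjectionOnto x) : F) -
        (ℝ ∙ v)ᗮ.orthogonalProjectionOnto y)‖ := by
        rw [hT, sub_smul]; nth_rewrite 1 [hy]; abel_nf
    _ ≤ |⟪v, y⟫ - ⟪u, x⟫| + ‖U ((ℝ ∙ u)ᗮ.orthogonalProjectionOnto x) -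
        (ℝ ∙ v)ᗮ.orthogonalProjectionOnto y‖ := by
        refine (norm_add_le _ _).trans ?_
        rw [norm_smul, hv, mul_one, Real.norm_eq_abs, abs_sub_comm, ← Submodule.coe_sub, norm_coe]

lemma abs_inner_inv_norm_smul_sub_le {a x : E} {α z : F} {R ε : ℝ} (hR : 0 < R)
    (hRε : 9 * ε ≤ R ^ 2) (ha : R < 2 * ‖a‖) (hx : ‖x‖ ≤ R)
    (hxz : |⟪α, z⟫ - ⟪a, x⟫| ≤ ε) (haα : |⟪α, α⟫ - ⟪a, a⟫| ≤ ε) :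
    |⟪‖α‖⁻¹ • α, z⟫ - ⟪‖a‖⁻¹ • a, x⟫| ≤ 9 * ε / R := by
  rw [real_inner_self_eq_norm_sq, real_inner_self_eq_norm_sq] at haα
  rw [real_inner_smul_left, real_inner_smul_left, inv_mul_eq_div, inv_mul_eq_div]
  refine abs_div_sub_div_le hR hRε ha (norm_nonneg _) ?_ hxz haα
  exact (abs_real_inner_le_norm a x).trans (by gcongr)

lemma two_mul_inner_sub_sub (p q r : E) :
    2 * ⟪p - r, q - r⟫ = ‖p - r‖ ^ 2 + ‖q - r‖ ^ 2 - ‖p - q‖ ^ 2 := by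
  rw [← sub_sub_sub_cancel_right p q r, norm_sub_sq_real (p - r)]
  ring

lemma abs_inner_sub_sub_sub_le {ι : Type*} (x : ι → E) (y : ι → F) {η : ℝ}
    (h : ∀ i j, |‖y i - y j‖ ^ 2 - ‖x i - x j‖ ^ 2| ≤ η) (k i j : ι) :
    |⟪y i - y k, y j - y k⟫ - ⟪x i - x k, x j - x k⟫| ≤ 3 / 2 * η := by
  have hx := two_mul_inner_sub_sub (x i) (x j) (x k)
  have hy := two_mul_inner_sub_sub (y i) (y j) (y k)
  have hik := abs_le.1 (h i k)
  have hjk := abs_le.1 (h j k)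
  have hij := abs_le.1 (h i j)
  rw [abs_le]
  constructor <;> linarith

lemma abs_inner_sub_sub_sub_le_of_norm_sub {ι : Type*} (x : ι → E) (y : ι → F) {D δ : ℝ}
    (hx : ∀ i j, ‖x i - x j‖ ≤ D) (hy : ∀ i j, ‖y i - y j‖ ≤ D)
    (hxy : ∀ i j, |‖y i - y j‖ - ‖x i - x j‖| ≤ δ) (k i j : ι) :
    |⟪y i - y k, y j - y k⟫ - ⟪x i - x k, x j - x k⟫| ≤ 3 * D * δ :=
  (abs_inner_sub_sub_sub_le x y (fun i j => abs_sq_sub_sq_le (norm_nonneg _) (norm_nonneg _)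
    (hy i j) (hx i j) (hxy i j)) k i j).trans_eq (by ring)

lemma norm_sq_le_of_abs_inner_sub_le {x : E} {y : F} {ε : ℝ}
    (h : |⟪y, y⟫ - ⟪x, x⟫| ≤ ε) : ‖y‖ ^ 2 ≤ ‖x‖ ^ 2 + ε := by
  rw [real_inner_self_eq_norm_sq, real_inner_self_eq_norm_sq] at h
  linarith [(abs_le.1 h).2]

end

def GramStable (m : ℕ) (C : ℝ) : Prop :=
  ∀ {E F : Type u} [NormedAddCommGroup E] [InnerProductSpace ℝ E] [FiniteDimensional ℝ E]
    [NormedAddCommGroup F] [InnerProductSpace ℝ F] [FiniteDimensional ℝ F],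
    finrank ℝ E = m → finrank ℝ F = m →
    ∀ {ι : Type v} (x : ι → E) (y : ι → F) {ε : ℝ}, 0 ≤ ε → IsBounded (range x) →
      (∀ i j, |⟪y i, y j⟫ - ⟪x i, x j⟫| ≤ ε) →
      ∃ U : E ≃ₗᵢ[ℝ] F, ∀ i, ‖U (x i) - y i‖ ≤ C * √ε

lemma gramStable_zero : GramStable.{u, v} 0 1 := by
  intro E F _ _ _ _ _ _ hE hF ι x y ε hε _ hxy
  have : Subsingleton E := Module.finrank_zero_iff.1 hE
  obtain ⟨U, hU⟩ := exists_linearIsometryEquiv_norm_sub_le (hE.trans hF.symm) x y hε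
    (r := 0) (fun i => by rw [Subsingleton.elim (x i) 0, norm_zero])
    (fun i => norm_sq_le_of_abs_inner_sub_le (hxy i i))
  exact ⟨U, fun i => (hU i).trans_eq (by ring)⟩

variable {m : ℕ} {C : ℝ}

lemma GramStable.exists_linearIsometryEquiv_of_lt_two_mul_norm (h : GramStable.{u, v} m C)
    (hC : 0 ≤ C) {E F : Type u} [NormedAddCommGroup E] [InnerProductSpace ℝ E]
    [FiniteDimensional ℝ E] [NormedAddCommGroup F] [InnerProductSpace ℝ F]
    [FiniteDimensional ℝ F] (hE : finrank ℝ E = m + 1) (hF : finrank ℝ F = m + 1)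
    {ι : Type v} (x : ι → E) (y : ι → F) {ε R : ℝ} (hε : 0 ≤ ε) (hb : IsBounded (range x))
    (hxy : ∀ i j, |⟪y i, y j⟫ - ⟪x i, x j⟫| ≤ ε) (hxR : ∀ i, ‖x i‖ ≤ R) (k : ι)
    (hk : R < 2 * ‖x k‖) (hRε : 9 * √ε < R) :
    ∃ U : E ≃ₗᵢ[ℝ] F, ∀ i, ‖U (x i) - y i‖ ≤ (6 * C + 1) * √ε := by
  have hR : 0 < R := lt_of_le_of_lt (by positivity) hRε
  have hsq := Real.sq_sqrt hε
  have h9 : 9 * ε ≤ R ^ 2 := by nlinarith [Real.sqrt_nonneg ε]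
  have hxk : x k ≠ 0 := norm_pos_iff.1 (by linarith)
  have hyk : y k ≠ 0 := by
    intro h0
    have := (abs_le.1 (hxy k k)).1
    rw [h0, inner_zero_left, real_inner_self_eq_norm_sq] at this
    nlinarith
  set u := ‖x k‖⁻¹ • x k
  set v := ‖y k‖⁻¹ • y k
  have hu : ‖u‖ = 1 := norm_smul_inv_norm hxk
  have hv : ‖v‖ = 1 := norm_smul_inv_norm hyk
  have hcoord : ∀ i, |⟪v, y i⟫ - ⟪u, x i⟫| ≤ 9 * ε / R := fun i =>
    abs_inner_inv_norm_smul_sub_le hR h9 hk (hxR i) (hxy k i) (hxy k k)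
  have hs : ∀ i, |⟪u, x i⟫| ≤ R := fun i =>
    (abs_real_inner_le_norm u (x i)).trans (by rw [hu, one_mul]; exact hxR i)
  have hdR : 9 * ε / R ≤ R := by rw [div_le_iff₀ hR]; nlinarith
  have hdε : 9 * ε / R ≤ √ε := by
    rw [div_le_iff₀ hR]; nlinarith [Real.sqrt_nonneg ε]
  set P := (ℝ ∙ u)ᗮ.orthogonalProjectionOnto
  set Q := (ℝ ∙ v)ᗮ.orthogonalProjectionOnto
  have hgram : ∀ i j, |⟪Q (y i), Q (y j)⟫ - ⟪P (x i), P (x j)⟫| ≤ 28 * ε := fun i j =>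
    (abs_inner_orthogonalProjectionOnto_sub_le hu hv (hxy i j) (hs i) (hs j) (hcoord i)
      (hcoord j) hdR).trans_eq (by field_simp; ring)
  have : Fact (finrank ℝ E = m + 1) := ⟨hE⟩
  have : Fact (finrank ℝ F = m + 1) := ⟨hF⟩
  have hu0 : u ≠ 0 := norm_ne_zero_iff.1 (by rw [hu]; exact one_ne_zero)
  have hv0 : v ≠ 0 := norm_ne_zero_iff.1 (by rw [hv]; exact one_ne_zero)
  have hPx : IsBounded (range (P ∘ x)) := by
    rw [range_comp]; exact P.lipschitz.isBounded_image hb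
  obtain ⟨U₂, hU₂⟩ := h (E := (ℝ ∙ u)ᗮ) (F := (ℝ ∙ v)ᗮ) (finrank_orthogonal_span_singleton hu0)
    (finrank_orthogonal_span_singleton hv0) (P ∘ x) (Q ∘ y) (by positivity) hPx hgram
  obtain ⟨T, hT⟩ := exists_linearIsometryEquiv_norm_sub_le_add (hE.trans hF.symm) hu hv U₂
  have h28 : √(28 * ε) ≤ 6 * √ε := by
    rw [Real.sqrt_le_left (by positivity), mul_pow, hsq]; linarith
  refine ⟨T, fun i => (hT _ _).trans ?_⟩
  calc _ ≤ √ε + C * (6 * √ε) := add_le_add ((hcoord i).trans hdε) ((hU₂ i).trans (by gcongr))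
    _ = (6 * C + 1) * √ε := by ring

lemma GramStable.succ (h : GramStable.{u, v} m C) (hC : 0 ≤ C) :
    GramStable.{u, v} (m + 1) (6 * C + 19) := by
  intro E F _ _ _ _ _ _ hE hF ι x y ε hε hb hxy
  by_cases hsmall : ∀ i, ‖x i‖ ≤ 9 * √ε
  · obtain ⟨U, hU⟩ := exists_linearIsometryEquiv_norm_sub_le (hE.trans hF.symm) x y hε hsmall
      (fun i => norm_sq_le_of_abs_inner_sub_le (hxy i i))
    exact ⟨U, fun i => (hU i).trans (by nlinarith [Real.sqrt_nonneg ε])⟩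
  push Not at hsmall
  obtain ⟨i₀, hi₀⟩ := hsmall
  obtain ⟨r, hr⟩ := isBounded_iff_forall_norm_le.1 hb
  have hbdd : BddAbove (range fun i => ‖x i‖) :=
    ⟨r, forall_mem_range.2 fun i => hr _ (mem_range_self i)⟩
  set R := ⨆ i, ‖x i‖
  have hxR : ∀ i, ‖x i‖ ≤ R := le_ciSup hbdd
  have hRε : 9 * √ε < R := hi₀.trans_le (hxR i₀)
  have : Nonempty ι := ⟨i₀⟩
  obtain ⟨k, hk⟩ := exists_lt_of_lt_ciSup (show R / 2 < R by linarith [Real.sqrt_nonneg ε])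
  obtain ⟨U, hU⟩ := h.exists_linearIsometryEquiv_of_lt_two_mul_norm hC hE hF x y hε hb hxy hxR k
    (by linarith) hRε
  exact ⟨U, fun i => (hU i).trans (by gcongr; norm_num)⟩

theorem exists_gramStable (m : ℕ) : ∃ C, 0 < C ∧ GramStable.{u, v} m C := by
  induction m with
  | zero => exact ⟨1, one_pos, gramStable_zero⟩
  | succ m ih =>
    obtain ⟨C, hC, h⟩ := ih
    exact ⟨6 * C + 19, by positivity, h.succ hC.le⟩

theorem GramStable.exists_isometryEquiv (h : GramStable.{u, v} m C) {E : Type u}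
    [NormedAddCommGroup E] [InnerProductSpace ℝ E] [FiniteDimensional ℝ E]
    (hE : finrank ℝ E = m) {ι : Type v} (x y : ι → E) {D δ : ℝ} (hδ : 0 ≤ δ)
    (hx : ∀ i j, ‖x i - x j‖ ≤ D) (hy : ∀ i j, ‖y i - y j‖ ≤ D)
    (hxy : ∀ i j, |‖y i - y j‖ - ‖x i - x j‖| ≤ δ) :
    ∃ g : E ≃ᵢ E, ∀ i, ‖g (x i) - y i‖ ≤ C * √(3 * D * δ) := by
  rcases isEmpty_or_nonempty ι with hι | ⟨⟨k⟩⟩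
  · exact ⟨IsometryEquiv.refl E, hι.elim⟩
  have hD : 0 ≤ D := (norm_nonneg _).trans (hx k k)
  have hb : IsBounded (range fun i => x i - x k) :=
    isBounded_iff_forall_norm_le.2 ⟨D, forall_mem_range.2 fun i => hx i k⟩
  obtain ⟨U, hU⟩ := h hE hE (fun i => x i - x k) (fun i => y i - y k) (by positivity) hb
    (abs_inner_sub_sub_sub_le_of_norm_sub x y hx hy hxy k)
  refine ⟨(IsometryEquiv.subRight (x k)).trans
    (U.toIsometryEquiv.trans (IsometryEquiv.addRight (y k))), fun i => ?_⟩
  calc _ = ‖U (x i - x k) - (y i - y k)‖ := by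
        congr 1
        simp only [IsometryEquiv.trans_apply, IsometryEquiv.addRight_apply,
          IsometryEquiv.subRight_apply, LinearIsometryEquiv.coe_toIsometryEquiv]
        abel
    _ ≤ C * √(3 * D * δ) := hU i

theorem stmt4_general (n : ℕ) (D : ℝ) (hD : 0 < D) :
    ∃ C₂ : ℝ, 0 < C₂ ∧ ∀ δ : ℝ, 0 < δ →
      ∀ A B : Set (EuclideanSpace ℝ (Fin n)), A.Nonempty → B.Nonempty →
        IsCompact A → IsCompact B → Metric.diam A ≤ D → Metric.diam B ≤ D →
        ∀ f : A ≃ₜ B, (∀ x y : A, |dist (f x) (f y) - dist x y| < δ) →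
          ∃ g : EuclideanSpace ℝ (Fin n) ≃ᵢ EuclideanSpace ℝ (Fin n),
            ∀ x : A, ‖g (x : EuclideanSpace ℝ (Fin n)) - ((f x : B) : EuclideanSpace ℝ (Fin n))‖
              ≤ C₂ * Real.sqrt δ := by
  obtain ⟨C, hC, hstable⟩ := exists_gramStable.{0, 0} n
  refine ⟨C * √(3 * D), by positivity, fun δ hδ A B _ _ hA hB hdA hdB f hf => ?_⟩
  obtain ⟨g, hg⟩ := hstable.exists_isometryEquiv finrank_euclideanSpace_fin
    (fun i : A => (i : EuclideanSpace ℝ (Fin n))) (fun i => ((f i : B) : EuclideanSpace ℝ (Fin n)))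
    hδ.le (fun i j => dist_eq_norm (i : EuclideanSpace ℝ (Fin n)) j ▸
      (dist_le_diam_of_mem hA.isBounded i.2 j.2).trans hdA)
    (fun i j => dist_eq_norm ((f i : B) : EuclideanSpace ℝ (Fin n)) (f j) ▸
      (dist_le_diam_of_mem hB.isBounded (f i).2 (f j).2).trans hdB)
    (fun i j => by simpa only [Subtype.dist_eq, dist_eq_norm] using (hf i j).le)
  refine ⟨g, fun i => (hg i).trans_eq ?_⟩
  rw [Real.sqrt_mul (by positivity), mul_assoc]

/-- Alestalo–Trotsenko–Väisälä: a δ-isometry between compacta of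
diameter ≤ D in ℝⁿ is uniformly C₂√δ-close to the restriction of a global isometry of ℝⁿ. -/
theorem stmt4 (n : ℕ) (hn : 1 ≤ n) (D : ℝ) (hD : 0 < D) :
    ∃ C₂ : ℝ, 0 < C₂ ∧ ∀ δ : ℝ, 0 < δ →
      ∀ A B : Set (EuclideanSpace ℝ (Fin n)), A.Nonempty → B.Nonempty →
        IsCompact A → IsCompact B → Metric.diam A ≤ D → Metric.diam B ≤ D →
        ∀ f : A ≃ₜ B, (∀ x y : A, |dist (f x) (f y) - dist x y| < δ) →
          ∃ g : EuclideanSpace ℝ (Fin n) ≃ᵢ EuclideanSpace ℝ (Fin n),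
            ∀ x : A, ‖g (x : EuclideanSpace ℝ (Fin n)) - ((f x : B) : EuclideanSpace ℝ (Fin n))‖
              ≤ C₂ * Real.sqrt δ :=
  stmt4_general n D hD
end

section
/- Let K be the space of nonempty compact convex subsets of ℝ³ with the Hausdorff metric, on which the group Iso(ℝ³) of surjective isometries of ℝ³ acts by g·D = g(D), and let K_s = {D ∈ K : s(D) = 0} on which O(3) acts by g·D = g(D). The map r : K → K_s, r(D) = D − s(D) = {x − s(D) : x ∈ D}, sends each Iso(ℝ³)-orbit into a single O(3)-orbit, and the induced map of orbit spaces K/Iso(ℝ³) → K_s/O(3) (both with quotient topologies) is a homeomorphism; moreover r preserves affine dimension. -/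
open Metric Set MeasureTheory

noncomputable section

abbrev E3 : Type := EuclideanSpace ℝ (Fin 3)

/-- A convex body in ℝ³: a compact convex set with nonempty interior. -/
def IsConvexBody (K : Set E3) : Prop :=
  IsCompact K ∧ Convex ℝ K ∧ (interior K).Nonempty

/-- The boundary (intrinsic) distance on the frontier of `K`: the infimum of
lengths (total variation) of continuous paths in `frontier K` joining `x` to `y`. -/
def bdryDist (K : Set E3) (x y : E3) : ENNReal :=
  sInf {L | ∃ γ : ℝ → E3, ContinuousOn γ (Icc 0 1) ∧ γ 0 = x ∧ γ 1 = y ∧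
    (∀ t ∈ Icc (0:ℝ) 1, γ t ∈ frontier K) ∧ L = eVariationOn γ (Icc 0 1)}

/-- `φ` exhibits the metric space `X` as the boundary surface `(∂K, d_K)`. -/
def IsBdryChart (K : Set E3) {X : Type} [MetricSpace X] (φ : X ≃ frontier K) : Prop :=
  ∀ x y : X, dist x y = (bdryDist K (φ x : E3) (φ y : E3)).toReal

/-- `X` is (a metric space isometric to) the boundary surface `(∂K, d_K)`. -/
def IsBdrySurface (K : Set E3) (X : Type) [MetricSpace X] : Prop :=
  ∃ φ : X ≃ frontier K, IsBdryChart K φ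

/-- A metric space is intrinsic if every pair of points has a midpoint. -/
def IsIntrinsic (X : Type) [MetricSpace X] : Prop :=
  ∀ x y : X, ∃ z : X, dist x z = dist x y / 2 ∧ dist z y = dist x y / 2

/-- The comparison angle at `p` subtended by `x, y`. -/
def cmpAngle {X : Type} [MetricSpace X] (p x y : X) : ℝ :=
  Real.arccos ((dist p x ^ 2 + dist p y ^ 2 - dist x y ^ 2) / (2 * dist p x * dist p y))

/-- Curvature ≥ 0 in the comparison sense. -/
def NonnegCurv (X : Type) [MetricSpace X] : Prop :=
  ∀ p a b c : X, a ≠ p → b ≠ p → c ≠ p →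
    cmpAngle p a b + cmpAngle p b c + cmpAngle p c a ≤ 2 * Real.pi

/-- The unit 2-sphere in ℝ³. -/
def S2 : Set E3 := sphere (0 : E3) 1

/-- Affine dimension of a subset of ℝ³. -/
def affDim (K : Set E3) : ℕ :=
  Module.finrank ℝ (affineSpan ℝ K).direction

/-- The relative boundary of `K`: its frontier inside its affine span. -/
def relBoundary (K : Set E3) : Set E3 :=
  Subtype.val '' frontier ((Subtype.val : (affineSpan ℝ K : Set E3) → E3) ⁻¹' K)

/-- Length `‖x−z₁‖ + ‖z₁−z₂‖ + ⋯ + ‖z_k−y‖` of the chain `x, z₁, …, z_k, y`. -/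
def chainLen : E3 → E3 → List E3 → ℝ
  | x, y, [] => dist x y
  | x, y, z :: L => dist x z + chainLen z y L

/-- The pseudodistance of the double `DK`: infimum over chains of points of the relative
boundary of `K`, with evenly many points between points on the same side of the double
and oddly many points between points on different sides. -/
def doubleDist (K : Set E3) (p q : E3 × Bool) : ℝ :=
  sInf {c | ∃ L : List E3, (∀ z ∈ L, z ∈ relBoundary K) ∧
    (if p.2 = q.2 then Even L.length else Odd L.length) ∧ c = chainLen p.1 q.1 L}

/-- The metric space `X` is the double `DK` of `K`: the metric quotient of
`K × {0,1}` by the pseudometric `doubleDist`. -/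
def IsDoubleOf (K : Set E3) (X : Type) [MetricSpace X] : Prop :=
  ∃ q : K × Bool → X, Function.Surjective q ∧
    ∀ a b : K × Bool, dist (q a) (q b) = doubleDist K ((a.1 : E3), a.2) ((b.1 : E3), b.2)

/-- The support function of `K ⊂ ℝ³`. -/
def suppFn (K : Set E3) (u : E3) : ℝ := sSup ((fun x => inner ℝ x u : E3 → ℝ) '' K)

/-- The rotation-invariant probability measure on the unit sphere `S² ⊂ ℝ³`. -/
def sphereProb : Measure (sphere (0 : E3) 1) :=
  ((volume : Measure E3).toSphere Set.univ)⁻¹ • (volume : Measure E3).toSphere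

/-- The Steiner point `s(K) = 3∫_{S²} h_K(u)·u dσ(u)` of a convex compactum `K ⊂ ℝ³`. -/
def steinerPoint (K : Set E3) : E3 :=
  (3 : ℝ) • ∫ u : sphere (0 : E3) 1, suppFn K (u : E3) • (u : E3) ∂sphereProb

open TopologicalSpace in
/-- The hyperspace `K` of nonempty compact convex subsets of ℝ³ with the Hausdorff metric. -/
def KvSet : Set (NonemptyCompacts E3) := {D | Convex ℝ (D : Set E3)}

open TopologicalSpace in
/-- The hyperspace `K_s` of nonempty compact convex subsets of ℝ³ with Steiner point at the
origin, with the Hausdorff metric. -/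
def KsSet : Set (NonemptyCompacts E3) :=
  {D | Convex ℝ (D : Set E3) ∧ steinerPoint (D : Set E3) = 0}

/-- The `Iso(ℝ³)`-orbit equivalence on `K`, where `Iso(ℝ³)` acts by `g·D = g(D)`. -/
def IsoRel (a b : KvSet) : Prop :=
  ∃ g : E3 ≃ᵢ E3, g '' (a.1 : Set E3) = (b.1 : Set E3)

/-- The `O(3)`-orbit equivalence on `K_s`, where `O(3)` acts by `g·D = g(D)`. -/
def OrthRel (a b : KsSet) : Prop :=
  ∃ g : E3 ≃ₗᵢ[ℝ] E3, g '' (a.1 : Set E3) = (b.1 : Set E3)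

/-!
The Steiner point is equivariant under isometries, `s(g K) = g (s K)`. For a translation by `c`
the support function changes by `⟨c, u⟩`, and `3 ∫ ⟨c, u⟩ u dσ = c` because the second-moment
matrix of `σ` is `I / 3` (its off-diagonal entries vanish under coordinate reflections, its
diagonal entries agree under coordinate swaps and sum to `1`); a linear isometry preserves `σ`.
Hence `r (g D)` is the image of `r D` under the linear part of `g`. Since
`|h_K - h_L| ≤ d_H(K, L)` on the sphere, `s` is `3`-Lipschitz and `r` is `4`-Lipschitz for the
Hausdorff metric. The inclusion `K_s → K` is a continuous inverse of `r` on orbits, as `r D` is a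
translate of `D` and `r` fixes `K_s`. Translations do not change affine dimension.
-/

open scoped Pointwise

lemma image_set_smul {M α β F : Type*} [SMul M α] [SMul M β] [FunLike F α β]
    [MulActionHomClass F M α β] (f : F) (I : Set M) (A : Set α) : f '' (I • A) = I • f '' A := by
  simp only [← image2_smul, image_image2, image2_image_right, map_smul]

namespace LinearIsometryEquiv

variable {E : Type*} [NormedAddCommGroup E] [NormedSpace ℝ E]

def sphereHomeomorph (g : E ≃ₗᵢ[ℝ] E) : sphere (0 : E) 1 ≃ₜ sphere (0 : E) 1 :=
  g.toHomeomorph.subtype fun x => by simp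

@[simp]
lemma coe_sphereHomeomorph_apply (g : E ≃ₗᵢ[ℝ] E) (u : sphere (0 : E) 1) :
    (g.sphereHomeomorph u : E) = g u :=
  rfl

lemma preimage_sphereHomeomorph (g : E ≃ₗᵢ[ℝ] E) (s : Set (sphere (0 : E) 1)) :
    ((↑) : sphere (0 : E) 1 → E) '' (g.sphereHomeomorph ⁻¹' s) = g.symm '' ((↑) '' s) := by
  rw [← Homeomorph.image_symm, image_image, image_image]
  rfl

end LinearIsometryEquiv

lemma MeasureTheory.Measure.map_toSphere_sphereHomeomorph {E : Type*} [NormedAddCommGroup E]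
    [NormedSpace ℝ E] [MeasurableSpace E] [BorelSpace E] {μ : Measure E} {g : E ≃ₗᵢ[ℝ] E}
    (hg : MeasurePreserving g μ μ) :
    μ.toSphere.map g.sphereHomeomorph = μ.toSphere := by
  ext s hs
  have hmeas := g.sphereHomeomorph.measurable
  rw [map_apply hmeas hs, toSphere_apply' _ (hmeas hs), toSphere_apply' _ hs,
    g.preimage_sphereHomeomorph, ← image_set_smul, g.symm.image_eq_preimage_symm,
    LinearIsometryEquiv.symm_symm, hg.measure_preimage_emb g.toHomeomorph.measurableEmbedding]

instance : IsProbabilityMeasure sphereProb := by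
  have h0 : (volume : Measure E3).toSphere univ ≠ 0 :=
    Measure.measure_univ_ne_zero.2 (Measure.toSphere_ne_zero _)
  constructor
  rw [sphereProb, Measure.smul_apply, smul_eq_mul, ENNReal.inv_mul_cancel h0 (measure_ne_top _ _)]

lemma measurePreserving_sphereHomeomorph (g : E3 ≃ₗᵢ[ℝ] E3) :
    MeasurePreserving g.sphereHomeomorph sphereProb sphereProb :=
  ⟨g.sphereHomeomorph.measurable, by
    rw [sphereProb, Measure.map_smul, Measure.map_toSphere_sphereHomeomorph g.measurePreserving]⟩

lemma integral_comp_sphereHomeomorph {F : Type*} [NormedAddCommGroup F] [NormedSpace ℝ F]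
    (g : E3 ≃ₗᵢ[ℝ] E3) (f : sphere (0 : E3) 1 → F) :
    ∫ u, f (g.sphereHomeomorph u) ∂sphereProb = ∫ u, f u ∂sphereProb :=
  (measurePreserving_sphereHomeomorph g).integral_comp g.sphereHomeomorph.measurableEmbedding f

lemma Continuous.integrable_sphereProb {F : Type*} [NormedAddCommGroup F]
    {f : sphere (0 : E3) 1 → F} (hf : Continuous f) : Integrable f sphereProb :=
  hf.integrable_of_hasCompactSupport (.of_compactSpace f)

def negCoord (i : Fin 3) : E3 ≃ₗᵢ[ℝ] E3 :=
  LinearIsometryEquiv.piLpCongrRight 2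
    fun k => if k = i then LinearIsometryEquiv.neg ℝ else LinearIsometryEquiv.refl ℝ ℝ

lemma negCoord_apply (i k : Fin 3) (x : E3) : negCoord i x k = if k = i then -x k else x k := by
  by_cases h : k = i
  · subst h; simp [negCoord, LinearIsometryEquiv.piLpCongrRight]
  · simp [negCoord, LinearIsometryEquiv.piLpCongrRight, h]

def swapCoord (i j : Fin 3) : E3 ≃ₗᵢ[ℝ] E3 :=
  LinearIsometryEquiv.piLpCongrLeft 2 ℝ ℝ (Equiv.swap i j)

lemma swapCoord_apply (i j k : Fin 3) (x : E3) : swapCoord i j x k = x (Equiv.swap i j k) := by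
  simp [swapCoord, LinearIsometryEquiv.piLpCongrLeft_apply, Equiv.piCongrLeft'_apply,
    Equiv.swap_apply_def]

lemma integrable_coord_mul_coord (i j : Fin 3) :
    Integrable (fun u : sphere (0 : E3) 1 => (u : E3) i * (u : E3) j) sphereProb :=
  Continuous.integrable_sphereProb (by fun_prop)

lemma integral_coord_mul_coord_of_ne {i j : Fin 3} (hij : i ≠ j) :
    ∫ u : sphere (0 : E3) 1, (u : E3) i * (u : E3) j ∂sphereProb = 0 := by
  have h := integral_comp_sphereHomeomorph (negCoord i) fun u => (u : E3) i * (u : E3) j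
  simp only [LinearIsometryEquiv.coe_sphereHomeomorph_apply, negCoord_apply, ↓reduceIte,
    if_neg hij.symm, neg_mul, integral_neg] at h
  linarith

lemma integral_coord_sq_eq (i j : Fin 3) :
    ∫ u : sphere (0 : E3) 1, (u : E3) i * (u : E3) i ∂sphereProb
      = ∫ u : sphere (0 : E3) 1, (u : E3) j * (u : E3) j ∂sphereProb := by
  simpa only [LinearIsometryEquiv.coe_sphereHomeomorph_apply, swapCoord_apply,
    Equiv.swap_apply_left] using (integral_comp_sphereHomeomorph (swapCoord i j)
      fun u => (u : E3) i * (u : E3) i).symm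

lemma sum_integral_coord_sq :
    ∑ i : Fin 3, ∫ u : sphere (0 : E3) 1, (u : E3) i * (u : E3) i ∂sphereProb = 1 := by
  rw [← integral_finsetSum _ fun i _ => integrable_coord_mul_coord i i]
  have h : ∀ u : sphere (0 : E3) 1, ∑ i : Fin 3, (u : E3) i * (u : E3) i = 1 := fun u => by
    simpa [sq] using (EuclideanSpace.real_norm_sq_eq (u : E3)).symm
  simp [h]

lemma integral_coord_mul_coord (i j : Fin 3) :
    ∫ u : sphere (0 : E3) 1, (u : E3) i * (u : E3) j ∂sphereProb = if i = j then 3⁻¹ else 0 := by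
  split_ifs with hij
  · subst hij
    have h := sum_integral_coord_sq
    simp only [Fin.sum_univ_three, integral_coord_sq_eq _ i] at h
    linarith
  · exact integral_coord_mul_coord_of_ne hij

lemma integral_inner_smul_sphere (c : E3) :
    ∫ u : sphere (0 : E3) 1, inner ℝ c (u : E3) • (u : E3) ∂sphereProb = (3⁻¹ : ℝ) • c := by
  have hint : Integrable (fun u : sphere (0 : E3) 1 => inner ℝ c (u : E3) • (u : E3)) sphereProb :=
    Continuous.integrable_sphereProb (by fun_prop)
  ext j
  have hcoord : ∀ u : sphere (0 : E3) 1, inner ℝ c (u : E3) * (u : E3) j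
      = ∑ i, c i * ((u : E3) i * (u : E3) j) := fun u => by
    simp [PiLp.inner_apply, Finset.mul_sum, mul_comm, mul_left_comm]
  have hproj := (EuclideanSpace.proj (𝕜 := ℝ) j).integral_comp_comm hint
  simp only [map_smul, PiLp.proj_apply, smul_eq_mul] at hproj
  rw [← hproj]
  simp only [hcoord]
  rw [integral_finsetSum _ fun i _ => (integrable_coord_mul_coord i j).const_mul (c i)]
  simp [integral_const_mul, integral_coord_mul_coord, mul_comm]

section SupportFunction

variable {K L : Set E3}

lemma bddAbove_inner_image (hK : IsCompact K) (u : E3) :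
    BddAbove ((fun x => inner ℝ x u) '' K) :=
  (hK.image (by fun_prop)).bddAbove

lemma inner_le_suppFn (hK : IsCompact K) {x : E3} (hx : x ∈ K) (u : E3) :
    inner ℝ x u ≤ suppFn K u :=
  le_csSup (bddAbove_inner_image hK u) (mem_image_of_mem _ hx)

lemma suppFn_le (hne : K.Nonempty) {u : E3} {a : ℝ} (h : ∀ x ∈ K, inner ℝ x u ≤ a) :
    suppFn K u ≤ a :=
  csSup_le (hne.image _) (forall_mem_image.2 h)

lemma continuous_suppFn (hK : IsCompact K) : Continuous (suppFn K) :=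
  hK.continuous_sSup (f := fun u x => inner ℝ x u) (by fun_prop)

lemma suppFn_image_sub_const (hK : IsCompact K) (hne : K.Nonempty) (c u : E3) :
    suppFn ((· - c) '' K) u = suppFn K u - inner ℝ c u := by
  rw [suppFn, suppFn, ← OrderIso.subRight_apply,
    (OrderIso.subRight (inner ℝ c u)).map_csSup' (hne.image _) (bddAbove_inner_image hK u),
    image_image, image_image]
  simp [inner_sub_left]

lemma suppFn_image_linearIsometryEquiv (g : E3 ≃ₗᵢ[ℝ] E3) (u : E3) :
    suppFn (g '' K) u = suppFn K (g.symm u) := by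
  rw [suppFn, suppFn, image_image]
  simp_rw [← g.inner_map_map _ (g.symm u), g.apply_symm_apply]

lemma suppFn_sub_suppFn_le (hK : IsCompact K) (hKne : K.Nonempty) (hL : IsCompact L)
    (hLne : L.Nonempty) (u : E3) :
    suppFn K u - suppFn L u ≤ hausdorffDist K L * ‖u‖ := by
  have hfin := hausdorffEDist_ne_top_of_nonempty_of_bounded hKne hLne hK.isBounded hL.isBounded
  suffices suppFn K u ≤ suppFn L u + hausdorffDist K L * ‖u‖ by linarith
  refine suppFn_le hKne fun x hx => ?_
  obtain ⟨y, hy, hxy⟩ := hL.exists_infDist_eq_dist hLne x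
  calc inner ℝ x u = inner ℝ y u + inner ℝ (x - y) u := by rw [← inner_add_left, add_sub_cancel]
    _ ≤ suppFn L u + dist x y * ‖u‖ := by
      rw [dist_eq_norm]
      exact add_le_add (inner_le_suppFn hL hy u) (real_inner_le_norm _ _)
    _ ≤ suppFn L u + hausdorffDist K L * ‖u‖ := by
      rw [← hxy]
      gcongr
      exact infDist_le_hausdorffDist_of_mem hx hfin

lemma abs_suppFn_sub_suppFn_le (hK : IsCompact K) (hKne : K.Nonempty) (hL : IsCompact L)
    (hLne : L.Nonempty) (u : E3) :
    |suppFn K u - suppFn L u| ≤ hausdorffDist K L * ‖u‖ := by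
  rw [abs_sub_le_iff]
  exact ⟨suppFn_sub_suppFn_le hK hKne hL hLne u,
    hausdorffDist_comm (s := L) ▸ suppFn_sub_suppFn_le hL hLne hK hKne u⟩

end SupportFunction

section SteinerPoint

variable {K L : Set E3}

lemma integrable_suppFn_smul (hK : IsCompact K) :
    Integrable (fun u : sphere (0 : E3) 1 => suppFn K u • (u : E3)) sphereProb :=
  Continuous.integrable_sphereProb (((continuous_suppFn hK).comp continuous_subtype_val).smul
    continuous_subtype_val)

lemma steinerPoint_image_sub_const (hK : IsCompact K) (hne : K.Nonempty) (c : E3) :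
    steinerPoint ((· - c) '' K) = steinerPoint K - c := by
  have hint : Integrable (fun u : sphere (0 : E3) 1 => inner ℝ c (u : E3) • (u : E3)) sphereProb :=
    Continuous.integrable_sphereProb (by fun_prop)
  simp only [steinerPoint, suppFn_image_sub_const hK hne, sub_smul]
  rw [integral_sub (integrable_suppFn_smul hK) hint, integral_inner_smul_sphere, smul_sub,
    smul_smul]
  norm_num

lemma steinerPoint_image_linearIsometryEquiv (g : E3 ≃ₗᵢ[ℝ] E3) :
    steinerPoint (g '' K) = g (steinerPoint K) := by
  simp only [steinerPoint, suppFn_image_linearIsometryEquiv, map_smul]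
  rw [← integral_comp_sphereHomeomorph g, ← g.coe_toContinuousLinearEquiv,
    ← ContinuousLinearEquiv.integral_comp_comm]
  simp [map_smul]

lemma steinerPoint_image_isometryEquiv (hK : IsCompact K) (hne : K.Nonempty) (g : E3 ≃ᵢ E3) :
    steinerPoint (g '' K) = g (steinerPoint K) := by
  have hg : ⇑g = (· - -g 0) ∘ g.toRealLinearIsometryEquiv := by
    ext1 x; simp
  rw [hg, image_comp, steinerPoint_image_sub_const (hK.image (by fun_prop)) (hne.image _),
    steinerPoint_image_linearIsometryEquiv, Function.comp_apply]

lemma dist_steinerPoint_le (hK : IsCompact K) (hKne : K.Nonempty) (hL : IsCompact L)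
    (hLne : L.Nonempty) :
    dist (steinerPoint K) (steinerPoint L) ≤ 3 * hausdorffDist K L := by
  rw [dist_eq_norm, steinerPoint, steinerPoint, ← smul_sub,
    ← integral_sub (integrable_suppFn_smul hK) (integrable_suppFn_smul hL), norm_smul,
    Real.norm_ofNat]
  gcongr
  refine (norm_integral_le_of_norm_le_const (C := hausdorffDist K L)
    (Filter.Eventually.of_forall fun u => ?_)).trans_eq (by simp)
  have hu : ‖(u : E3)‖ = 1 := norm_eq_of_mem_sphere u
  rw [← sub_smul, norm_smul, Real.norm_eq_abs, hu]
  simpa [hu] using abs_suppFn_sub_suppFn_le hK hKne hL hLne u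

end SteinerPoint

lemma hausdorffDist_image_sub_le {E : Type*} [SeminormedAddCommGroup E] {s t : Set E}
    (hst : hausdorffEDist s t ≠ ⊤) (a b : E) :
    hausdorffDist ((· - a) '' s) ((· - b) '' t) ≤ hausdorffDist s t + dist a b := by
  have hsub : Isometry (· - a : E → E) := (IsometryEquiv.subRight a).isometry
  have hshift : hausdorffDist ((· - a) '' t) ((· - b) '' t) ≤ dist a b := by
    refine hausdorffDist_le_of_mem_dist dist_nonneg ?_ ?_ <;> rintro _ ⟨x, hx, rfl⟩
    · exact ⟨x - b, mem_image_of_mem _ hx, by rw [dist_sub_left]⟩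
    · exact ⟨x - a, mem_image_of_mem _ hx, by rw [dist_sub_left, dist_comm]⟩
  calc hausdorffDist ((· - a) '' s) ((· - b) '' t)
      ≤ hausdorffDist ((· - a) '' s) ((· - a) '' t) + hausdorffDist ((· - a) '' t) ((· - b) '' t) :=
        hausdorffDist_triangle (by rwa [hausdorffEDist_image hsub])
    _ ≤ hausdorffDist s t + dist a b := by rw [hausdorffDist_image hsub]; gcongr

lemma affDim_vadd (v : E3) (K : Set E3) : affDim (v +ᵥ K) = affDim K := by
  rw [affDim, affDim, ← AffineSubspace.pointwise_vadd_span,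
    AffineSubspace.pointwise_vadd_direction]

def steinerCentered (K : Set E3) : Set E3 := (· - steinerPoint K) '' K

section SteinerCentered

variable {K L : Set E3}

lemma steinerCentered_eq_vadd (K : Set E3) : steinerCentered K = -steinerPoint K +ᵥ K := by
  rw [steinerCentered, ← image_vadd]
  simp_rw [vadd_eq_add, neg_add_eq_sub]

lemma affDim_steinerCentered (K : Set E3) : affDim (steinerCentered K) = affDim K := by
  rw [steinerCentered_eq_vadd, affDim_vadd]

lemma steinerCentered_of_steinerPoint_eq_zero (h : steinerPoint K = 0) : steinerCentered K = K := by
  simp [steinerCentered, h]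

lemma image_add_steinerPoint_steinerCentered (K : Set E3) :
    (· + steinerPoint K) '' steinerCentered K = K := by
  simp [steinerCentered, image_image]

lemma steinerCentered_image_isometryEquiv (hK : IsCompact K) (hne : K.Nonempty) (g : E3 ≃ᵢ E3) :
    steinerCentered (g '' K) = g.toRealLinearIsometryEquiv '' steinerCentered K := by
  rw [steinerCentered, steinerCentered, steinerPoint_image_isometryEquiv hK hne, image_image,
    image_image]
  refine image_congr fun x _ => ?_
  simp only [map_sub, IsometryEquiv.toRealLinearIsometryEquiv_apply]
  abel

lemma hausdorffDist_steinerCentered_le (hK : IsCompact K) (hKne : K.Nonempty) (hL : IsCompact L)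
    (hLne : L.Nonempty) :
    hausdorffDist (steinerCentered K) (steinerCentered L) ≤ 4 * hausdorffDist K L := by
  have hfin := hausdorffEDist_ne_top_of_nonempty_of_bounded hKne hLne hK.isBounded hL.isBounded
  calc hausdorffDist (steinerCentered K) (steinerCentered L)
      ≤ hausdorffDist K L + dist (steinerPoint K) (steinerPoint L) :=
        hausdorffDist_image_sub_le hfin _ _
    _ ≤ 4 * hausdorffDist K L := by
      linarith [dist_steinerPoint_le hK hKne hL hLne, hausdorffDist_nonneg (s := K) (t := L)]

end SteinerCentered

lemma exists_homeomorph_quot_of_continuous {X Y : Type*} [TopologicalSpace X]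
    [TopologicalSpace Y] {R : X → X → Prop} {S : Y → Y → Prop} {f : X → Y} {g : Y → X}
    (hf : Continuous f) (hg : Continuous g) (hfR : ∀ a b, R a b → S (f a) (f b))
    (hgS : ∀ a b, S a b → R (g a) (g b)) (hgf : ∀ x, R (g (f x)) x) (hfg : ∀ y, S (f (g y)) y) :
    ∃ H : Quot R ≃ₜ Quot S, ∀ x, H (Quot.mk R x) = Quot.mk S (f x) :=
  ⟨{ toFun := Quot.lift (Quot.mk S ∘ f) fun a b h => Quot.sound (hfR a b h)
     invFun := Quot.lift (Quot.mk R ∘ g) fun a b h => Quot.sound (hgS a b h)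
     left_inv := Quot.ind fun x => Quot.sound (hgf x)
     right_inv := Quot.ind fun y => Quot.sound (hfg y)
     continuous_toFun := continuous_quot_lift _ (continuous_quot_mk.comp hf)
     continuous_invFun := continuous_quot_lift _ (continuous_quot_mk.comp hg) },
   fun _ => rfl⟩

lemma lipschitzWith_of_coe_eq_steinerCentered {r : KvSet → KsSet}
    (hr : ∀ D : KvSet, ((r D).1 : Set E3) = steinerCentered D.1) : LipschitzWith 4 r :=
  LipschitzWith.of_dist_le_mul fun a b => by
    simp only [Subtype.dist_eq, NonemptyCompacts.dist_eq, hr]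
    exact_mod_cast hausdorffDist_steinerCentered_le a.1.isCompact a.1.nonempty b.1.isCompact
      b.1.nonempty

/-- the map `r(D) = D − s(D)` sends `Iso(ℝ³)`-orbits into `O(3)`-orbits,
induces a homeomorphism of orbit spaces `K/Iso(ℝ³) → K_s/O(3)`, and preserves affine
dimension. -/
theorem stmt14 (r : KvSet → KsSet)
    (hr : ∀ D : KvSet, ((r D).1 : Set E3)
      = (fun x => x - steinerPoint (D.1 : Set E3)) '' (D.1 : Set E3)) :
    (∀ a b : KvSet, IsoRel a b → OrthRel (r a) (r b)) ∧
    (∃ H : Quot IsoRel ≃ₜ Quot OrthRel,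
      ∀ D : KvSet, H (Quot.mk IsoRel D) = Quot.mk OrthRel (r D)) ∧
    (∀ D : KvSet, affDim ((r D).1 : Set E3) = affDim (D.1 : Set E3)) := by
  change ∀ D : KvSet, ((r D).1 : Set E3) = steinerCentered D.1 at hr
  let incl : KsSet → KvSet := inclusion fun _ hD => hD.1
  have horbit (a b : KvSet) : IsoRel a b → OrthRel (r a) (r b) := by
    rintro ⟨g, hg⟩
    refine ⟨g.toRealLinearIsometryEquiv, ?_⟩
    rw [hr, hr, ← hg, steinerCentered_image_isometryEquiv a.1.isCompact a.1.nonempty]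
  have hrecenter (D : KvSet) : IsoRel (incl (r D)) D :=
    ⟨IsometryEquiv.addRight (steinerPoint D.1), by
      simpa [incl, hr] using image_add_steinerPoint_steinerCentered (D.1 : Set E3)⟩
  have hr_incl (D : KsSet) : OrthRel (r (incl D)) D :=
    ⟨LinearIsometryEquiv.refl ℝ E3, by
      simp [incl, hr, steinerCentered_of_steinerPoint_eq_zero D.2.2]⟩
  refine ⟨horbit, exists_homeomorph_quot_of_continuous
    (lipschitzWith_of_coe_eq_steinerCentered hr).continuous (continuous_inclusion _) horbit
    (fun _ _ ⟨g, hg⟩ => ⟨g.toIsometryEquiv, hg⟩) hrecenter hr_incl, fun D => ?_⟩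
  rw [hr, affDim_steinerCentered]
end
end
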